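/- arXiv:0906.4692 — 4 statements merged into one kernel-verified Lean document; each statement's English description precedes it below -/
import Mathlib

section
/- In the pruned graph PG(T), every vertex has at most ⌈log_{1+ε}(C_max)⌉ + 1 outgoing edges, where C_max is the maximum edge cost; consequently if all edge costs are at most n^{O(1)}, PG(T) has O((n/ε) log n) edges. -/
/-! Each kept edge `(v_i, v_j)` with `j ≤ n` is witnessed by an exponent `k ≥ 1` whose power
`(1+ε)^k` lies in `[c i j, c i (j+1))`. Since `c i` is monotone these intervals are disjoint
for different `j`, so distinct edges get distinct exponents, and `(1+ε)^k < C_max` leaves at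
most `⌈log_{1+ε} C_max⌉` of them. -/

theorem Monotone.eq_of_mem_Ico_succ {f : ℕ → ℝ} (hf : Monotone f) {x : ℝ} {j j' : ℕ}
    (h : x ∈ Set.Ico (f j) (f (j + 1))) (h' : x ∈ Set.Ico (f j') (f (j' + 1))) : j = j' := by
  by_contra hne
  rcases Nat.lt_or_gt_of_ne hne with hlt | hlt
  · exact (hf hlt).not_gt (h'.1.trans_lt h.2)
  · exact (hf hlt).not_gt (h.1.trans_lt h'.2)

theorem Nat.lt_ceil_logb_of_pow_lt {b M : ℝ} (hb : 1 < b) {k : ℕ} (h : b ^ k < M) :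
    k < ⌈Real.logb b M⌉₊ := by
  have hM : 0 < M := (pow_pos (zero_lt_one.trans hb) k).trans h
  refine Nat.lt_ceil.2 ((Real.lt_logb_iff_rpow_lt hb hM).2 ?_)
  rwa [Real.rpow_natCast]

theorem Finset.card_le_ceil_logb_of_forall_exists_pow_mem_Ico {f : ℕ → ℝ} (hf : Monotone f)
    {b M : ℝ} (hb : 1 < b) (hM : ∀ j, f j ≤ M) {s : Finset ℕ}
    (hs : ∀ j ∈ s, ∃ k : ℕ, 0 < k ∧ f j ≤ b ^ k ∧ b ^ k < f (j + 1)) :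
    s.card ≤ ⌈Real.logb b M⌉₊ := by
  calc s.card
      ≤ (Finset.Icc 1 ⌈Real.logb b M⌉₊).card := by
        refine Finset.card_le_card_of_forall_subsingleton
          (fun j k => b ^ k ∈ Set.Ico (f j) (f (j + 1))) (fun j hj => ?_) ?_
        · obtain ⟨k, hk, hlo, hhi⟩ := hs j hj
          have hkM := Nat.lt_ceil_logb_of_pow_lt hb (hhi.trans_le (hM (j + 1)))
          exact ⟨k, Finset.mem_Icc.2 ⟨hk, hkM.le⟩, hlo, hhi⟩
        · exact fun k _ j hj j' hj' => hf.eq_of_mem_Ico_succ hj.2 hj'.2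
    _ = ⌈Real.logb b M⌉₊ := Nat.card_Icc 1 _

theorem Finset.card_le_ceil_logb_add_one_of_forall_eq_or {f : ℕ → ℝ} (hf : Monotone f)
    {b M : ℝ} (hb : 1 < b) (hM : ∀ j, f j ≤ M) {s : Finset ℕ} (a : ℕ)
    (hs : ∀ j ∈ s, j = a ∨ ∃ k : ℕ, 0 < k ∧ f j ≤ b ^ k ∧ b ^ k < f (j + 1)) :
    s.card ≤ ⌈Real.logb b M⌉₊ + 1 := by
  have herase : (s.erase a).card ≤ ⌈Real.logb b M⌉₊ :=
    Finset.card_le_ceil_logb_of_forall_exists_pow_mem_Ico hf hb hM fun j hj =>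
      (hs j (Finset.mem_of_mem_erase hj)).resolve_left (Finset.ne_of_mem_erase hj)
  have := Finset.pred_card_le_card_erase (s := s) (a := a)
  omega

open Classical in
theorem pruned_graph_degree_general (n : ℕ) (c : ℕ → ℕ → ℝ) (ε : ℝ) (hε : 0 < ε)
    (Cmax : ℝ)
    (hmonoR : ∀ i j, c i j ≤ c i (j + 1))
    (hCmax : ∀ i j, c i j ≤ Cmax) :
    (∀ i, ((Finset.Icc (i + 1) (n + 1)).filter (fun j => j = n + 1 ∨
        ∃ k : ℕ, 0 < k ∧ c i j ≤ (1 + ε) ^ k ∧ (1 + ε) ^ k < c i (j + 1))).card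
      ≤ ⌈Real.logb (1 + ε) Cmax⌉₊ + 1) ∧
    (∑ i ∈ Finset.Icc 1 (n + 1),
        ((Finset.Icc (i + 1) (n + 1)).filter (fun j => j = n + 1 ∨
          ∃ k : ℕ, 0 < k ∧ c i j ≤ (1 + ε) ^ k ∧ (1 + ε) ^ k < c i (j + 1))).card)
      ≤ (n + 1) * (⌈Real.logb (1 + ε) Cmax⌉₊ + 1) := by
  have degree_le (i : ℕ) := Finset.card_le_ceil_logb_add_one_of_forall_eq_or
    (s := (Finset.Icc (i + 1) (n + 1)).filter _) (monotone_nat_of_le_succ (hmonoR i))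
    (show 1 < 1 + ε by linarith) (hCmax i) (n + 1) fun j hj => (Finset.mem_filter.1 hj).2
  refine ⟨degree_le, ?_⟩
  calc _ ≤ (Finset.Icc 1 (n + 1)).card • (⌈Real.logb (1 + ε) Cmax⌉₊ + 1) :=
        Finset.sum_le_card_nsmul _ _ _ fun i _ => degree_le i
    _ = (n + 1) * (⌈Real.logb (1 + ε) Cmax⌉₊ + 1) := by simp

open Classical in
/-- In the pruned graph `PG(T)` (edge `(v_i,v_j)` is kept iff
`j = n+1` or `c i j ≤ (1+ε)^k < c i (j+1)` for some positive integer `k`), every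
vertex has at most `⌈log_{1+ε} C_max⌉ + 1` outgoing edges, where `C_max` bounds all
edge costs; consequently, the total number of edges of `PG(T)` is at most
`(n+1) · (⌈log_{1+ε} C_max⌉ + 1)` (hence `O((n/ε) log n)` when costs are `n^{O(1)}`). -/
theorem pruned_graph_degree (n : ℕ) (c : ℕ → ℕ → ℝ) (ε : ℝ) (hε : 0 < ε)
    (Cmax : ℝ)
    (hpos : ∀ i j, 0 < c i j)
    (hmonoR : ∀ i j, c i j ≤ c i (j + 1))
    (hCmax : ∀ i j, c i j ≤ Cmax) :
    (∀ i, ((Finset.Icc (i + 1) (n + 1)).filter (fun j => j = n + 1 ∨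
        ∃ k : ℕ, 0 < k ∧ c i j ≤ (1 + ε) ^ k ∧ (1 + ε) ^ k < c i (j + 1))).card
      ≤ ⌈Real.logb (1 + ε) Cmax⌉₊ + 1) ∧
    (∑ i ∈ Finset.Icc 1 (n + 1),
        ((Finset.Icc (i + 1) (n + 1)).filter (fun j => j = n + 1 ∨
          ∃ k : ℕ, 0 < k ∧ c i j ≤ (1 + ε) ^ k ∧ (1 + ε) ^ k < c i (j + 1))).card)
      ≤ (n + 1) * (⌈Real.logb (1 + ε) Cmax⌉₊ + 1) :=
  pruned_graph_degree_general n c ε hε Cmax hmonoR hCmax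
end

section
/- The analogous identity holds for adaptive entropies: with T_q defined as the string of q-grams of T, Σ_{u∈Σ^k} |u_T|·H_0^a(u_T) = |T_{k+1}|·H_0^a(T_{k+1}) − |T_k|·H_0^a(T_k), where H_0^a(s)·|s| = log(|s|!) − Σ_c log(n_c!). -/
/-- `u_T`: the string of single symbols following the occurrences of `u` in `T`,
taken from left to right. -/
def following {α : Type*} [DecidableEq α] (T u : List α) : List α :=
  (List.range T.length).filterMap fun i =>
    if (T.drop i).take u.length = u then (T.drop (i + u.length)).head? else none


/-- `|s|·H₀ᵃ(s) = log(|s|!) − Σ_c log(n_c!)`: zero-th order *adaptive* empirical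
entropy cost (bits). -/
noncomputable def nH0a {α : Type*} [DecidableEq α] (s : List α) : ℝ :=
  Real.logb 2 (Nat.factorial s.length : ℝ)
    - ∑ c ∈ s.toFinset, Real.logb 2 (Nat.factorial (s.count c) : ℝ)

/-- `|T|·H_kᵃ(T) = Σ_{u ∈ Σ^k} |u_T|·H₀ᵃ(u_T)`: `k`-th order adaptive entropy cost. -/
noncomputable def nHka {α : Type*} [Fintype α] [DecidableEq α] (k : ℕ) (T : List α) : ℝ :=
  ∑ u : Fin k → α, nH0a (following T (List.ofFn u))

/-- `T_q`: the string over the alphabet of `q`-grams whose `i`-th symbol is the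
substring `T[i, i+q-1]`. -/
def grams {α : Type*} (q : ℕ) (T : List α) : List (List α) :=
  (List.range (T.length + 1 - q)).map fun i => (T.drop i).take q

/-!
An occurrence of the symbol `c` in `u_T` is exactly an occurrence of the `(k+1)`-gram `uc` in
`T`, and `|u_T|` is the number of occurrences of `u` at positions that have a successor, i.e.
the number of occurrences of the `k`-gram `u` in `T` without its last symbol. Hence summing
`log(n_c!)` over all `u` and `c` gives the count term of `|T_{k+1}|·H₀ᵃ(T_{k+1})`, summing
`log(|u_T|!)` over all `u` gives the count term of `|T_k|·H₀ᵃ(T_k)`, and the two length terms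
cancel because, for nonempty `T`, the strings `T_{k+1}` and `T_k` have the same length.
-/

open Finset in
theorem sum_toFinset_count_eq_sum_comp {β ι M : Type*} [DecidableEq β] [Fintype ι]
    [AddCommMonoid M] {g : ℕ → M} (hg : g 0 = 0) {e : ι → β} (he : Function.Injective e)
    {s : List β} (hs : ∀ b ∈ s, b ∈ Set.range e) :
    ∑ b ∈ s.toFinset, g (s.count b) = ∑ i, g (s.count (e i)) := by
  rw [← sum_image (f := fun b => g (s.count b)) he.injOn]
  refine sum_subset (fun b hb => ?_) (fun b _ hb => ?_)
  · obtain ⟨i, rfl⟩ := hs b (List.mem_toFinset.mp hb)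
    exact mem_image_of_mem e (mem_univ i)
  · rw [List.count_eq_zero.mpr (by simpa using hb), hg]

/- `nH0a` counts with the `BEq` instance coming from `DecidableEq`, whereas `List.count` on
lists of lists elaborates with `List.instBEq`; any lawful `BEq` is allowed here, and `congr!`
identifies the two (`lawful_beq_subsingleton`). -/
theorem nH0a_eq_sub_sum_comp {β ι : Type*} [DecidableEq β] [BEq β] [LawfulBEq β] [Fintype ι]
    {e : ι → β} (he : Function.Injective e) {s : List β} (hs : ∀ b ∈ s, b ∈ Set.range e) :
    nH0a s = Real.logb 2 (s.length.factorial : ℝ)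
      - ∑ i, Real.logb 2 ((s.count (e i)).factorial : ℝ) := by
  rw [nH0a, sum_toFinset_count_eq_sum_comp (g := fun n => Real.logb 2 (n.factorial : ℝ))
    (by simp) he hs]
  congr!

theorem countP_range_eq_of_le {p : ℕ → Bool} {m n : ℕ} (hmn : m ≤ n) (hp : ∀ i, p i → i < m) :
    (List.range n).countP p = (List.range m).countP p := by
  obtain ⟨d, rfl⟩ := Nat.exists_eq_add_of_le hmn
  rw [List.range_add, List.countP_append, List.countP_map, Nat.add_eq_left, List.countP_eq_zero]
  intro i _ hi
  have := hp (m + i) hi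
  omega

section
variable {α : Type*}

theorem take_add_one_eq_append_singleton_iff {l u : List α} {c : α} :
    l.take (u.length + 1) = u ++ [c] ↔ l.take u.length = u ∧ l[u.length]? = some c := by
  rw [List.take_add_one]
  constructor
  · intro h
    cases hc : l[u.length]? with
    | none =>
      have := congrArg List.length h
      simp [hc] at this
      omega
    | some d =>
      rw [hc, Option.toList_some] at h
      obtain ⟨h1, h2⟩ := List.append_inj' h rfl
      exact ⟨h1, by simpa using h2⟩
  · rintro ⟨h1, h2⟩
    rw [h1, h2, Option.toList_some]

theorem take_drop_dropLast {l : List α} {i k : ℕ} (h : i + k < l.length) :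
    (l.dropLast.drop i).take k = (l.drop i).take k := by
  rw [List.dropLast_eq_take, List.drop_take, List.take_take]
  congr 1
  omega

theorem mem_range_ofFn {k : ℕ} {w : List α} (h : w.length = k) :
    w ∈ Set.range (List.ofFn : (Fin k → α) → List α) := by
  subst h
  exact ⟨_, List.ofFn_getElem⟩

theorem mem_range_ofFn_append_singleton {k : ℕ} {w : List α} (h : w.length = k + 1) :
    w ∈ Set.range fun p : (Fin k → α) × α => List.ofFn p.1 ++ [p.2] := by
  obtain rfl | ⟨v, c, rfl⟩ := w.eq_nil_or_concat
  · simp at h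
  obtain ⟨u, rfl⟩ := mem_range_ofFn (k := k) (by simpa using h)
  exact ⟨(u, c), (List.concat_eq_append ..).symm⟩

theorem ofFn_append_singleton_injective {k : ℕ} :
    Function.Injective fun p : (Fin k → α) × α => List.ofFn p.1 ++ [p.2] := by
  rintro ⟨u, c⟩ ⟨v, d⟩ h
  obtain ⟨h1, h2⟩ := List.append_inj h (by simp)
  simp_all

theorem length_grams (q : ℕ) (T : List α) : (grams q T).length = T.length + 1 - q := by
  simp [grams]

theorem length_of_mem_grams {q : ℕ} {T w : List α} (h : w ∈ grams q T) : w.length = q := by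
  obtain ⟨i, hi, rfl⟩ := List.mem_map.mp h
  simp only [List.mem_range] at hi
  simp only [List.length_take, List.length_drop]
  omega

variable [DecidableEq α]

theorem count_grams (q : ℕ) (T w : List α) :
    (grams q T).count w
      = (List.range (T.length + 1 - q)).countP fun i => (T.drop i).take q = w := by
  rw [grams, List.count_eq_countP, List.countP_map]
  exact List.countP_congr fun i _ => by simp

theorem count_following (T u : List α) (c : α) :
    (following T u).count c = (grams (u.length + 1) T).count (u ++ [c]) := by
  rw [following, List.count_filterMap, count_grams, Nat.add_sub_add_right,
    countP_range_eq_of_le (Nat.sub_le _ _)]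
  · refine List.countP_congr fun i _ => ?_
    simp only [decide_eq_true_eq, take_add_one_eq_append_singleton_iff, List.getElem?_drop,
      List.head?_drop]
    split_ifs with h <;> simp [h]
  · intro i hi
    simp only [List.head?_drop, beq_iff_eq] at hi
    split_ifs at hi
    obtain ⟨h, -⟩ := List.getElem?_eq_some_iff.mp hi
    omega

theorem length_following (T u : List α) (hT : T ≠ []) :
    (following T u).length = (grams u.length T.dropLast).count u := by
  have hpos : 0 < T.length := List.length_pos_iff.mpr hT
  rw [following, List.length_filterMap_eq_countP, count_grams, List.length_dropLast,
    Nat.sub_add_cancel hpos, countP_range_eq_of_le (Nat.sub_le _ _)]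
  · refine List.countP_congr fun i hi => ?_
    rw [List.mem_range] at hi
    rw [take_drop_dropLast (by omega)]
    split_ifs with h <;> simp [h]
    omega
  · intro i hi
    simp only [List.head?_drop] at hi
    split_ifs at hi <;> simp at hi
    omega

end

/-- The analogous identity holds for adaptive entropies:
`Σ_{u∈Σ^k} |u_T|·H₀ᵃ(u_T) = |T_{k+1}|·H₀ᵃ(T_{k+1}) − |T_k|·H₀ᵃ(T_k)`, with the
`q`-gram strings as in the non-adaptive identity (counts interpreted so that an
occurrence of the `(k+1)`-gram `uc` corresponds to an occurrence of `c` in `u_T`,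
i.e. `T_k` ranges over the positions having a following symbol). -/
theorem nHka_as_gram_difference (α : Type*) [Fintype α] [DecidableEq α]
    (T : List α) (k : ℕ) :
    nHka k T = nH0a (grams (k + 1) T) - nH0a (grams k T.dropLast) := by
  rcases eq_or_ne T [] with rfl | hT
  · rcases k with _ | k <;> simp [nHka, nH0a, following, grams]
  have hlen : (grams (k + 1) T).length = (grams k T.dropLast).length := by
    simp only [length_grams, List.length_dropLast]
    have := List.length_pos_iff.mpr hT
    omega
  rw [nHka,
    nH0a_eq_sub_sum_comp ofFn_append_singleton_injective
      fun w hw => mem_range_ofFn_append_singleton (length_of_mem_grams hw),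
    nH0a_eq_sub_sum_comp List.ofFn_injective fun w hw => mem_range_ofFn (length_of_mem_grams hw),
    hlen, Fintype.sum_prod_type]
  simp_rw [nH0a_eq_sub_sum_comp Function.injective_id fun c _ => Set.mem_range_self c]
  simp only [id, count_following, length_following _ _ hT, List.length_ofFn,
    Finset.sum_sub_distrib]
  ring
end

section
/- If a string s' is obtained from s by inserting or deleting a single character c at an arbitrary position, then the Move-To-Front encodings MTF(s') and MTF(s) differ in at most |Σ| positions (aligning the common symbols); specifically, only the first occurrence of each alphabet symbol between the edited position and the next occurrence of c can change its MTF code. -/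
/-- Move-To-Front encoding of a string, starting from the list (ordering of the
alphabet) `L`: each symbol is encoded by its current position in the list and then
moved to the front. -/
def mtfEncode {α : Type*} [DecidableEq α] (L : List α) : List α → List ℕ
  | [] => []
  | a :: s => L.idxOf a :: mtfEncode (a :: L.erase a) s

/-!
Split `s` at the edit point as `A ++ t`. Both strings encode `A` identically and leave the same
list `S`; the suffix `t` is then encoded from `S` and from `S` with `c` moved to the front. These
two lists differ only in the position of `c`, a relation preserved by every move-to-front step,
and under it a symbol whose index agrees in both lists keeps agreeing from then on. Right after
a symbol is read it sits at the front of both lists, so only the first occurrence in `t` of each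
symbol can be encoded differently: at most `|Σ|` positions differ.
-/

namespace List

variable {α : Type*}

theorem insertIdx_length_append (A t : List α) (c : α) :
    (A ++ t).insertIdx A.length c = A ++ c :: t := by
  induction A with
  | nil => simp
  | cons a A ih => simp [insertIdx_succ_cons, ih]

theorem idxOf_eq_idxOf_erase_add [DecidableEq α] (a x : α) (hx : x ≠ a) (L : List α) :
    L.idxOf x = (L.erase a).idxOf x + if L.idxOf a < L.idxOf x then 1 else 0 := by
  induction L with
  | nil => simp
  | cons y L ih =>
    rcases eq_or_ne y a with rfl | hya
    · simp [idxOf_cons_ne _ hx.symm]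
    rw [erase_cons_tail (by simpa using hya), idxOf_cons_ne _ hya]
    rcases eq_or_ne y x with rfl | hyx
    · simp
    rw [idxOf_cons_ne _ hyx, idxOf_cons_ne _ hyx]
    split_ifs at ih ⊢ <;> omega

end List

theorem card_filter_getElem?_append_ne {β : Type*} [DecidableEq β] {l : List β} {m : ℕ}
    (hl : l.length = m) (x y : List β) (n : ℕ) :
    ((Finset.range (m + n)).filter fun i => (l ++ x)[i]? ≠ (l ++ y)[i]?).card =
      ((Finset.range n).filter fun j => x[j]? ≠ y[j]?).card := by
  subst hl
  rw [Finset.range_add_eq_union, Finset.filter_union, Finset.filter_map,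
    Finset.filter_false_of_mem fun i hi => by
      simp [List.getElem?_append_left (Finset.mem_range.1 hi)],
    Finset.empty_union, Finset.card_map]
  simp [List.getElem?_append_right]

section MoveToFront

variable {α : Type*} [DecidableEq α]

def moveToFront (a : α) (L : List α) : List α := a :: L.erase a

def mtfState (L s : List α) : List α := s.foldl (fun L a => moveToFront a L) L

theorem mtfState_append (L u v : List α) : mtfState L (u ++ v) = mtfState (mtfState L u) v :=
  List.foldl_append

theorem mtfEncode_append (L u v : List α) :
    mtfEncode L (u ++ v) = mtfEncode L u ++ mtfEncode (mtfState L u) v := by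
  induction u generalizing L with
  | nil => rfl
  | cons a u ih => exact congrArg _ (ih _)

theorem length_mtfEncode (L s : List α) : (mtfEncode L s).length = s.length := by
  induction s generalizing L with
  | nil => rfl
  | cons a s ih => simp [mtfEncode, ih]

theorem getElem?_mtfEncode (L s : List α) (j : ℕ) :
    (mtfEncode L s)[j]? = s[j]?.map (mtfState L (s.take j)).idxOf := by
  induction s generalizing L j with
  | nil => simp [mtfEncode]
  | cons a s ih => cases j <;> simp [mtfEncode, mtfState, moveToFront, ih]

/-- Orderings of the alphabet that differ only in where `c` sits. -/
structure SameExcept (c : α) (L₁ L₂ : List α) : Prop where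
  nodup_left : L₁.Nodup
  nodup_right : L₂.Nodup
  mem_left : ∀ x, x ∈ L₁
  mem_right : ∀ x, x ∈ L₂
  erase_eq : L₁.erase c = L₂.erase c

theorem nodup_moveToFront {L : List α} (hL : L.Nodup) (a : α) : (moveToFront a L).Nodup :=
  List.nodup_cons.mpr ⟨hL.not_mem_erase, hL.erase a⟩

theorem mem_moveToFront {L : List α} {a x : α} : x ∈ moveToFront a L ↔ x = a ∨ x ∈ L := by
  rcases eq_or_ne x a with rfl | hxa
  · simp [moveToFront]
  · simp [moveToFront, List.mem_erase_of_ne hxa, hxa]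

namespace SameExcept

variable {c : α} {L₁ L₂ : List α}

theorem refl {L : List α} (hL : L.Nodup) (hmem : ∀ x, x ∈ L) : SameExcept c L L :=
  ⟨hL, hL, hmem, hmem, rfl⟩

theorem moveToFront_self_right (h : SameExcept c L₁ L₂) :
    SameExcept c L₁ (_root_.moveToFront c L₂) where
  nodup_left := h.nodup_left
  nodup_right := nodup_moveToFront h.nodup_right c
  mem_left := h.mem_left
  mem_right _ := mem_moveToFront.mpr (Or.inr (h.mem_right _))
  erase_eq := by rw [_root_.moveToFront, List.erase_cons_head, h.erase_eq]

theorem moveToFront (h : SameExcept c L₁ L₂) (a : α) :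
    SameExcept c (moveToFront a L₁) (moveToFront a L₂) where
  nodup_left := nodup_moveToFront h.nodup_left a
  nodup_right := nodup_moveToFront h.nodup_right a
  mem_left _ := mem_moveToFront.mpr (Or.inr (h.mem_left _))
  mem_right _ := mem_moveToFront.mpr (Or.inr (h.mem_right _))
  erase_eq := by
    rcases eq_or_ne a c with rfl | hac
    · simp only [_root_.moveToFront, List.erase_cons_head, h.erase_eq]
    · rw [_root_.moveToFront, _root_.moveToFront, List.erase_cons_tail (by simpa using hac),
        List.erase_cons_tail (by simpa using hac), List.erase_comm, h.erase_eq, List.erase_comm]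

theorem mtfState (h : SameExcept c L₁ L₂) (u : List α) :
    SameExcept c (mtfState L₁ u) (mtfState L₂ u) := by
  induction u generalizing L₁ L₂ with
  | nil => exact h
  | cons a u ih => exact ih (h.moveToFront a)

theorem idxOf_ne_left (h : SameExcept c L₁ L₂) {x y : α} (hxy : x ≠ y) :
    L₁.idxOf x ≠ L₁.idxOf y :=
  fun e => hxy ((List.idxOf_inj (h.mem_left x)).1 e)

theorem idxOf_ne_right (h : SameExcept c L₁ L₂) {x y : α} (hxy : x ≠ y) :
    L₂.idxOf x ≠ L₂.idxOf y :=
  fun e => hxy ((List.idxOf_inj (h.mem_right x)).1 e)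

theorem idxOf_lt_idxOf_iff (h : SameExcept c L₁ L₂) {a b : α} (hac : a ≠ c) (hab : a ≠ b)
    (hb : L₁.idxOf b = L₂.idxOf b) :
    L₁.idxOf a < L₁.idxOf b ↔ L₂.idxOf a < L₂.idxOf b := by
  -- both orders are read off the common list `L₁.erase c = L₂.erase c`
  have ha₁ := List.idxOf_eq_idxOf_erase_add c a hac L₁
  have ha₂ := List.idxOf_eq_idxOf_erase_add c a hac L₂
  rw [h.erase_eq] at ha₁
  have hac₁ := h.idxOf_ne_left hac
  have hac₂ := h.idxOf_ne_right hac
  have hab₁ := h.idxOf_ne_left hab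
  have hab₂ := h.idxOf_ne_right hab
  rcases eq_or_ne b c with rfl | hbc
  · split_ifs at ha₁ ha₂ <;> omega
  have hb₁ := List.idxOf_eq_idxOf_erase_add c b hbc L₁
  have hb₂ := List.idxOf_eq_idxOf_erase_add c b hbc L₂
  rw [h.erase_eq] at hb₁
  have hbc₁ := h.idxOf_ne_left hbc
  have hbc₂ := h.idxOf_ne_right hbc
  split_ifs at ha₁ ha₂ hb₁ hb₂ <;> omega

theorem idxOf_moveToFront (h : SameExcept c L₁ L₂) (a : α) {b : α}
    (hb : L₁.idxOf b = L₂.idxOf b) :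
    (_root_.moveToFront a L₁).idxOf b = (_root_.moveToFront a L₂).idxOf b := by
  rcases eq_or_ne a b with rfl | hab
  · simp [_root_.moveToFront]
  rcases eq_or_ne a c with rfl | hac
  · rw [_root_.moveToFront, _root_.moveToFront, h.erase_eq]
  have e₁ := List.idxOf_eq_idxOf_erase_add a b hab.symm L₁
  have e₂ := List.idxOf_eq_idxOf_erase_add a b hab.symm L₂
  simp only [h.idxOf_lt_idxOf_iff hac hab hb] at e₁
  rw [_root_.moveToFront, _root_.moveToFront, List.idxOf_cons_ne _ hab, List.idxOf_cons_ne _ hab]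
  split_ifs at e₁ e₂ <;> omega

theorem idxOf_mtfState (h : SameExcept c L₁ L₂) (u : List α) {b : α}
    (hb : L₁.idxOf b = L₂.idxOf b) :
    (_root_.mtfState L₁ u).idxOf b = (_root_.mtfState L₂ u).idxOf b := by
  induction u generalizing L₁ L₂ with
  | nil => exact hb
  | cons a u ih => exact ih (h.moveToFront a) (h.idxOf_moveToFront a hb)

theorem getElem?_mtfEncode_eq_of_getElem_eq (h : SameExcept c L₁ L₂) {t : List α} {i j : ℕ}
    (hij : i < j) (hj : j < t.length) (heq : t[i] = t[j]) :
    (mtfEncode L₁ t)[j]? = (mtfEncode L₂ t)[j]? := by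
  obtain ⟨v, hv⟩ := List.take_prefix_take_left (l := t) (Nat.succ_le_of_lt hij)
  rw [getElem?_mtfEncode, getElem?_mtfEncode, List.getElem?_eq_getElem hj, ← hv,
    List.take_add_one, List.getElem?_eq_getElem (by omega), ← heq]
  simp only [Option.toList_some, mtfState_append, Option.map_some, Option.some_inj]
  -- right after position `i` the symbol `t[i]` is at the front of both lists
  exact ((h.mtfState _).moveToFront t[i]).idxOf_mtfState v (by simp [_root_.moveToFront])

theorem card_filter_mtfEncode_ne_le [Fintype α] (h : SameExcept c L₁ L₂) (t : List α) :
    ((Finset.range t.length).filter fun j => (mtfEncode L₁ t)[j]? ≠ (mtfEncode L₂ t)[j]?).card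
      ≤ Fintype.card α := by
  refine (Finset.card_le_card_of_injOn (fun j => t.getD j c)
    (fun _ _ => Finset.mem_coe.2 (Finset.mem_univ _)) ?_).trans_eq Finset.card_univ
  intro i hi j hj hij
  simp only [Finset.coe_filter, Finset.mem_range, Set.mem_ofPred_eq] at hi hj
  simp only [List.getD_eq_getElem _ _ hi.1, List.getD_eq_getElem _ _ hj.1] at hij
  rcases lt_trichotomy i j with hlt | rfl | hlt
  · exact absurd (h.getElem?_mtfEncode_eq_of_getElem_eq hlt hj.1 hij) hj.2
  · rfl
  · exact absurd (h.getElem?_mtfEncode_eq_of_getElem_eq hlt hi.1 hij.symm) hi.2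

end SameExcept

end MoveToFront

/-- If `s'` is obtained from `s` by inserting a single character
`c` at an arbitrary position `p` (equivalently, `s` is obtained from `s'` by
deleting that character), then — aligning the common symbols, i.e. removing the
code of the inserted character from `MTF(s')` — the encodings `MTF(s)` and
`MTF(s')` differ in at most `σ = |Σ|` positions. -/
theorem mtf_insert_stable (α : Type*) [Fintype α] [DecidableEq α]
    (L : List α) (hnodup : L.Nodup) (hfull : ∀ a : α, a ∈ L)
    (s : List α) (p : ℕ) (hp : p ≤ s.length) (c : α) :
    ((Finset.range s.length).filter fun i =>
        (mtfEncode L s)[i]? ≠ ((mtfEncode L (s.insertIdx p c)).eraseIdx p)[i]?).card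
      ≤ Fintype.card α := by
  obtain ⟨A, t, rfl, rfl⟩ : ∃ A t, s = A ++ t ∧ A.length = p :=
    ⟨s.take p, s.drop p, (List.take_append_drop p s).symm, List.length_take_of_le hp⟩
  have hS : SameExcept c (mtfState L A) (moveToFront c (mtfState L A)) :=
    ((SameExcept.refl hnodup hfull).mtfState A).moveToFront_self_right
  have hE : (mtfEncode L A).length = A.length := length_mtfEncode L A
  rw [List.insertIdx_length_append, mtfEncode_append, mtfEncode_append, List.length_append,
    List.eraseIdx_append_of_length_le hE.le, hE, Nat.sub_self,
    card_filter_getElem?_append_ne hE]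
  exact hS.card_filter_mtfEncode_ne_le t
end

section
/- Over the alphabet Σ = {c_1,...,c_σ} partitioned into σ/α blocks of α consecutive symbols, let T be the concatenation of De Bruijn sequences of order 2 of the blocks (so |T| = σα and every symbol occurs exactly α times). For each symbol c, the segment L_c of BWT(T) corresponding to rows of the BWT matrix prefixed by c has length exactly α and consists of α pairwise distinct symbols. -/
/-!
All occurrences of `c` in `T` lie in the De Bruijn sequence `w = D (c / a)` of its block. The `a`
cyclic factors `c y` of `w` show that `c` occurs exactly `a` times, and the `a` cyclic factors
`y c` show that the cyclic predecessors of these occurrences in `w` are pairwise distinct. Reading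
`T` instead of `w` cyclically changes at most one of these predecessors, that of an occurrence at
the start of `w`, and the new predecessor lies in another block, so distinctness is kept.
-/

open Finset

lemma List.getD_mem {α : Type*} {l : List α} {j : ℕ} (d : α) (hj : j < l.length) :
    l.getD j d ∈ l := by
  rw [List.getD_eq_getElem _ _ hj]; exact List.getElem_mem hj

lemma List.filterMap_ite_eq_map_filter {α β : Type*} (l : List α) (p : α → Prop)
    [DecidablePred p] (g : α → β) :
    l.filterMap (fun x => if p x then some (g x) else none) = (l.filter fun x => p x).map g := by
  rw [← List.filterMap_eq_map', List.filterMap_filter]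
  simp

def cyclicPred (n j : ℕ) : ℕ := (j + n - 1) % n

lemma cyclicPred_lt {n : ℕ} (j : ℕ) (hn : 0 < n) : cyclicPred n j < n := Nat.mod_lt _ hn

lemma cyclicPred_add_one_mod {n r : ℕ} (hr : r < n) : (cyclicPred n r + 1) % n = r := by
  rw [cyclicPred, Nat.mod_add_mod, Nat.sub_add_cancel (by omega), Nat.add_mod_right,
    Nat.mod_eq_of_lt hr]

lemma cyclicPred_mul_mod {n m : ℕ} (j : ℕ) (hn : 0 < n) :
    cyclicPred (n * m) j % m = cyclicPred m (j % m) := by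
  rcases Nat.eq_zero_or_pos m with rfl | hm
  · simp [cyclicPred]
  have hj := Nat.mod_add_div j m
  have hnm : n * m = (n - 1) * m + m := by
    rw [← Nat.succ_mul, Nat.succ_eq_add_one, Nat.sub_add_cancel hn]
  have hsplit : j + n * m - 1 = (j % m + m - 1) + (j / m + (n - 1)) * m := by
    rw [add_mul, mul_comm (j / m)]; omega
  rw [cyclicPred, cyclicPred, Nat.mod_mod_of_dvd _ (Dvd.intro_left n rfl), hsplit,
    Nat.add_mul_mod_self_right]

lemma mod_eq_zero_of_cyclicPred_div_ne {n m j : ℕ} (hj : j < n * m)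
    (h : cyclicPred (n * m) j / m ≠ j / m) : j % m = 0 := by
  by_contra h0
  have hm : 0 < m := Nat.pos_of_ne_zero (by rintro rfl; simp at hj)
  have hj' := Nat.mod_add_div j m
  have hjm := Nat.mod_lt j hm
  have hpred : cyclicPred (n * m) j = (j % m - 1) + m * (j / m) := by
    rw [cyclicPred, show j + n * m - 1 = j - 1 + n * m by omega, Nat.add_mod_right,
      Nat.mod_eq_of_lt (by omega)]
    omega
  rw [hpred, Nat.add_mul_div_left _ _ hm, Nat.div_eq_of_lt (by omega), zero_add] at h
  exact h rfl

theorem Set.InjOn.of_eq_of_mem_of_subsingleton {α β : Type*} {f g : α → β} {s : Set α}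
    {B : Set β} (hg : Set.InjOn g s) (hfg : ∀ x ∈ s, f x ∈ B → f x = g x)
    (hout : {x ∈ s | f x ∉ B}.Subsingleton) : Set.InjOn f s := by
  intro x hx y hy hxy
  by_cases hxB : f x ∈ B
  · exact hg hx hy (by rw [← hfg x hx hxB, ← hfg y hy (hxy ▸ hxB), hxy])
  · exact hout ⟨hx, hxB⟩ ⟨hy, hxy ▸ hxB⟩

section DeBruijn

variable {α : Type*} (d : α) (B : Finset α) (w : List α)

structure IsDeBruijnOrderTwo : Prop where
  subset : ∀ x ∈ w, x ∈ B
  existsUnique_pair : ∀ x ∈ B, ∀ y ∈ B,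
    ∃! j, j < w.length ∧ w.getD j d = x ∧ w.getD ((j + 1) % w.length) d = y

variable {d B w}

lemma isDeBruijnOrderTwo_of_card_filter_eq_one [DecidableEq α] (hmem : ∀ x ∈ w, x ∈ B)
    (hpair : ∀ x ∈ B, ∀ y ∈ B,
      #{j ∈ range w.length | w.getD (j % w.length) d = x ∧ w.getD ((j + 1) % w.length) d = y}
        = 1) :
    IsDeBruijnOrderTwo d B w := by
  refine ⟨hmem, fun x hx y hy => ?_⟩
  refine (existsUnique_congr fun j => ?_).mp (card_eq_one_iff_existsUnique.mp (hpair x hx y hy))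
  rw [mem_filter, mem_range]
  exact and_congr_right fun hj => by rw [Nat.mod_eq_of_lt hj]

namespace IsDeBruijnOrderTwo

variable (hw : IsDeBruijnOrderTwo d B w)
include hw

lemma card_filter_getD_eq [DecidableEq α] {c : α} (hc : c ∈ B) :
    #{j ∈ range w.length | w.getD j d = c} = #B := by
  refine card_bij (fun j _ => w.getD ((j + 1) % w.length) d) ?_ ?_ ?_
  · intro j hj
    rw [mem_filter, mem_range] at hj
    exact hw.subset _ (List.getD_mem d (Nat.mod_lt _ (by omega)))
  · intro j hj j' hj' h
    rw [mem_filter, mem_range] at hj hj'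
    have hy := hw.subset _ (List.getD_mem d (Nat.mod_lt (j + 1) (by omega)))
    exact (hw.existsUnique_pair c hc _ hy).unique ⟨hj.1, hj.2, rfl⟩ ⟨hj'.1, hj'.2, h.symm⟩
  · intro y hy
    obtain ⟨j, ⟨hj, hjc, hjy⟩, -⟩ := hw.existsUnique_pair c hc y hy
    exact ⟨j, by rw [mem_filter, mem_range]; exact ⟨hj, hjc⟩, hjy⟩

lemma injOn_getD_cyclicPred (c : α) :
    Set.InjOn (fun j => w.getD (cyclicPred w.length j) d)
      {j | j < w.length ∧ w.getD j d = c} := by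
  rintro j ⟨hj, hjc⟩ j' ⟨hj', hj'c⟩ h
  have hn : 0 < w.length := by omega
  have hp := cyclicPred_lt j hn
  have hc := hw.subset _ (hjc ▸ List.getD_mem d hj)
  have hy := hw.subset _ (List.getD_mem d hp)
  have hpp := (hw.existsUnique_pair _ hy c hc).unique
    ⟨hp, rfl, by rw [cyclicPred_add_one_mod hj, hjc]⟩
    ⟨cyclicPred_lt j' hn, h.symm, by rw [cyclicPred_add_one_mod hj', hj'c]⟩
  rw [← cyclicPred_add_one_mod hj, ← cyclicPred_add_one_mod hj', hpp]

end IsDeBruijnOrderTwo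

end DeBruijn

section Concatenation

variable {α : Type*} {D : ℕ → List α} {n m : ℕ}

lemma length_flatMap_range_of_length_eq (hD : ∀ q < n, (D q).length = m) :
    ((List.range n).flatMap D).length = n * m := by
  induction n with
  | zero => simp
  | succ n ih =>
    rw [List.range_succ, List.flatMap_append, List.length_append,
      ih fun q hq => hD q (by omega)]
    simp [hD n (by omega), Nat.succ_mul]

lemma getD_flatMap_range_of_length_eq (d : α) (hD : ∀ q < n, (D q).length = m) {j : ℕ}
    (hj : j < n * m) : ((List.range n).flatMap D).getD j d = (D (j / m)).getD (j % m) d := by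
  induction n with
  | zero => simp at hj
  | succ n ih =>
    have hlen := length_flatMap_range_of_length_eq fun q (hq : q < n) => hD q (by omega)
    rw [Nat.add_one_mul] at hj
    rw [List.range_succ, List.flatMap_append]
    by_cases hjn : j < n * m
    · rw [List.getD_append _ _ _ _ (by omega), ih (fun q hq => hD q (by omega)) hjn]
    · have hm : 0 < m := Nat.pos_of_ne_zero (by rintro rfl; simp at hj)
      have hq : j / m = n := Nat.div_eq_of_lt_le (by omega) (by rw [Nat.add_one_mul]; omega)
      have hr : j % m = j - n * m := by
        have := Nat.mod_add_div j m; rw [hq, mul_comm] at this; omega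
      rw [List.getD_append_right _ _ _ _ (by omega), hlen, hq, hr]
      simp

lemma getD_flatMap_range_mul_add (d : α) (hD : ∀ q < n, (D q).length = m) {q r : ℕ}
    (hq : q < n) (hr : r < m) : ((List.range n).flatMap D).getD (q * m + r) d = (D q).getD r d := by
  have hlt : q * m + r < n * m := by nlinarith
  rw [getD_flatMap_range_of_length_eq d hD hlt, mul_comm, Nat.mul_add_div (by omega),
    Nat.mul_add_mod, Nat.div_eq_of_lt hr, Nat.mod_eq_of_lt hr, add_zero]

lemma blk_getD_flatMap_range (d : α) (hD : ∀ q < n, (D q).length = m) {blk : α → ℕ}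
    (hblk : ∀ q < n, ∀ x ∈ D q, blk x = q) {j : ℕ}
    (hj : j < n * m) : blk (((List.range n).flatMap D).getD j d) = j / m := by
  have hm : 0 < m := Nat.pos_of_ne_zero (by rintro rfl; simp at hj)
  have hq : j / m < n := Nat.div_lt_of_lt_mul (by rwa [mul_comm])
  rw [getD_flatMap_range_of_length_eq d hD hj]
  exact hblk _ hq _ (List.getD_mem d (by rw [hD _ hq]; exact Nat.mod_lt j hm))

lemma card_filter_getD_flatMap_range [DecidableEq α] (d : α) (hD : ∀ q < n, (D q).length = m)
    {blk : α → ℕ} (hblk : ∀ q < n, ∀ x ∈ D q, blk x = q) {c : α} (hc : blk c < n) :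
    #{j ∈ range (n * m) | ((List.range n).flatMap D).getD j d = c} =
      #{r ∈ range m | (D (blk c)).getD r d = c} := by
  refine card_nbij' (· % m) (blk c * m + ·) ?_ ?_ ?_ ?_
  · intro j hj
    rw [mem_coe, mem_filter, mem_range] at hj ⊢
    have hm : 0 < m := Nat.pos_of_ne_zero (by rintro rfl; simp at hj)
    have hq : j / m = blk c := hj.2 ▸ (blk_getD_flatMap_range d hD hblk hj.1).symm
    exact ⟨Nat.mod_lt j hm, by rw [← hq, ← getD_flatMap_range_of_length_eq d hD hj.1, hj.2]⟩
  · intro r hr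
    rw [mem_coe, mem_filter, mem_range] at hr ⊢
    exact ⟨by nlinarith, by rw [getD_flatMap_range_mul_add d hD hc hr.1, hr.2]⟩
  · intro j hj
    rw [mem_coe, mem_filter, mem_range] at hj
    have hq : j / m = blk c := hj.2 ▸ (blk_getD_flatMap_range d hD hblk hj.1).symm
    simpa [hq, mul_comm] using Nat.div_add_mod j m
  · intro r hr
    rw [mem_coe, mem_filter, mem_range] at hr
    simp [Nat.mod_eq_of_lt hr.1]

lemma injOn_getD_cyclicPred_flatMap_range (d : α) (hD : ∀ q < n, (D q).length = m)
    {blk : α → ℕ} (hblk : ∀ q < n, ∀ x ∈ D q, blk x = q) {c : α}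
    (hinj : Set.InjOn (fun r => (D (blk c)).getD (cyclicPred m r) d)
      {r | r < m ∧ (D (blk c)).getD r d = c}) :
    Set.InjOn (fun j => ((List.range n).flatMap D).getD (cyclicPred (n * m) j) d)
      {j | j < n * m ∧ ((List.range n).flatMap D).getD j d = c} := by
  have hocc : ∀ j, j < n * m → ((List.range n).flatMap D).getD j d = c →
      j / m = blk c ∧ (D (blk c)).getD (j % m) d = c ∧ j % m < m := by
    intro j hj hjc
    have hq : j / m = blk c := hjc ▸ (blk_getD_flatMap_range d hD hblk hj).symm
    have hm : 0 < m := Nat.pos_of_ne_zero (by rintro rfl; simp at hj)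
    refine ⟨hq, ?_, Nat.mod_lt j hm⟩
    rw [← hq, ← getD_flatMap_range_of_length_eq d hD hj, hjc]
  have hpos : ∀ j, j < n * m → 0 < n := fun j hj =>
    Nat.pos_of_ne_zero (by rintro rfl; simp at hj)
  refine Set.InjOn.of_eq_of_mem_of_subsingleton (B := {x | blk x = blk c})
    (g := fun j => (D (blk c)).getD (cyclicPred m (j % m)) d) ?_ ?_ ?_
  · rintro j ⟨hj, hjc⟩ j' ⟨hj', hj'c⟩ h
    obtain ⟨hq, hjc, hr⟩ := hocc j hj hjc
    obtain ⟨hq', hj'c, hr'⟩ := hocc j' hj' hj'c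
    have := hinj ⟨hr, hjc⟩ ⟨hr', hj'c⟩ h
    rw [← Nat.div_add_mod j m, ← Nat.div_add_mod j' m, hq, hq', this]
  · rintro j ⟨hj, hjc⟩ (hB : blk _ = blk c)
    have hp := cyclicPred_lt j (by nlinarith : 0 < n * m)
    rw [blk_getD_flatMap_range d hD hblk hp] at hB
    rw [getD_flatMap_range_of_length_eq d hD hp, hB, cyclicPred_mul_mod j (hpos j hj)]
  · have hzero : ∀ j, j < n * m → ((List.range n).flatMap D).getD j d = c →
        blk (((List.range n).flatMap D).getD (cyclicPred (n * m) j) d) ≠ blk c → j % m = 0 := by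
      intro j hj hjc hjB
      refine mod_eq_zero_of_cyclicPred_div_ne hj ?_
      rwa [← blk_getD_flatMap_range d hD hblk (cyclicPred_lt j (by nlinarith)), (hocc j hj hjc).1]
    rintro j ⟨⟨hj, hjc⟩, hjB⟩ j' ⟨⟨hj', hj'c⟩, hj'B⟩
    rw [← Nat.div_add_mod j m, ← Nat.div_add_mod j' m, (hocc j hj hjc).1, (hocc j' hj' hj'c).1,
      hzero j hj hjc hjB, hzero j' hj' hj'c hj'B]

end Concatenation

theorem debruijn_bwt_segments_general (a l : ℕ)
    (D : ℕ → List ℕ)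
    (hlen : ∀ i < l, (D i).length = a * a)
    (halph : ∀ i < l, ∀ x ∈ D i, a * i ≤ x ∧ x < a * (i + 1))
    (hdebruijn : ∀ i < l, ∀ x y, a * i ≤ x → x < a * (i + 1) → a * i ≤ y →
      y < a * (i + 1) →
      ((Finset.range (a * a)).filter fun j =>
          (D i).getD (j % (a * a)) 0 = x ∧ (D i).getD ((j + 1) % (a * a)) 0 = y).card = 1)
    (T : List ℕ) (hT : T = (List.range l).flatMap D) :
    ∀ c < l * a,
      ((List.range T.length).filterMap fun j =>
          if T.getD j 0 = c then some (T.getD ((j + T.length - 1) % T.length) 0)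
          else none).length = a ∧
      ((List.range T.length).filterMap fun j =>
          if T.getD j 0 = c then some (T.getD ((j + T.length - 1) % T.length) 0)
          else none).Nodup := by
  intro c hc
  have ha : 0 < a := Nat.pos_of_ne_zero (by rintro rfl; simp at hc)
  have hblk : ∀ q < l, ∀ x ∈ D q, x / a = q := fun q hq x hx =>
    Nat.div_eq_of_lt_le (by linarith [(halph q hq x hx).1]) (by linarith [(halph q hq x hx).2])
  have hi : c / a < l := Nat.div_lt_of_lt_mul (by rwa [mul_comm])
  have hc : c ∈ Ico (a * (c / a)) (a * (c / a + 1)) :=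
    mem_Ico.mpr ⟨Nat.mul_div_le c a, Nat.lt_mul_div_succ c ha⟩
  have hw : IsDeBruijnOrderTwo 0 (Ico (a * (c / a)) (a * (c / a + 1))) (D (c / a)) := by
    refine isDeBruijnOrderTwo_of_card_filter_eq_one
      (fun x hx => mem_Ico.mpr (halph _ hi x hx)) fun x hx y hy => ?_
    rw [mem_Ico] at hx hy
    rw [hlen _ hi]
    exact hdebruijn _ hi x y hx.1 hx.2 hy.1 hy.2
  subst hT
  rw [List.filterMap_ite_eq_map_filter, length_flatMap_range_of_length_eq hlen]
  refine ⟨?_, (List.nodup_range.filter _).map_on ?_⟩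
  · rw [List.length_map]
    change #{j ∈ range (l * (a * a)) | _} = a
    rw [card_filter_getD_flatMap_range 0 hlen hblk hi, ← hlen _ hi, hw.card_filter_getD_eq hc,
      Nat.card_Ico, mul_add, mul_one, Nat.add_sub_cancel_left]
  · intro j hj j' hj'
    simp only [List.mem_filter, List.mem_range, decide_eq_true_eq] at hj hj'
    have hinj := hw.injOn_getD_cyclicPred c
    rw [hlen _ hi] at hinj
    exact injOn_getD_cyclicPred_flatMap_range 0 hlen hblk hinj hj hj'

/-- Let the alphabet `{0,…,l·a−1}` (symbols encoded as naturals,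
`σ = l·a`) be partitioned into `l` blocks of `a` consecutive symbols (the block of
`x` is `x / a`).  For each block `i < l`, let `D i` be a (linearized circular)
De Bruijn sequence of order 2 over block `i`: it has length `a²`, uses only symbols
of block `i`, and every ordered pair of symbols of block `i` occurs exactly once as
a cyclic factor.  Let `T = D 0 ++ D 1 ++ ⋯ ++ D (l−1)` (so `|T| = l·a²` and every
symbol occurs exactly `a` times).  For each symbol `c`, the portion `L_c` of
`BWT(T)` corresponding to the rows of the BWT matrix prefixed by `c` — i.e. the
multiset of cyclic predecessors of the occurrences of `c` in `T`, here listed in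
text order — has length exactly `a` and consists of pairwise distinct symbols. -/
theorem debruijn_bwt_segments (a l : ℕ) (ha : 1 < a) (hl : 0 < l)
    (D : ℕ → List ℕ)
    (hlen : ∀ i < l, (D i).length = a * a)
    (halph : ∀ i < l, ∀ x ∈ D i, a * i ≤ x ∧ x < a * (i + 1))
    (hdebruijn : ∀ i < l, ∀ x y, a * i ≤ x → x < a * (i + 1) → a * i ≤ y →
      y < a * (i + 1) →
      ((Finset.range (a * a)).filter fun j =>
          (D i).getD (j % (a * a)) 0 = x ∧ (D i).getD ((j + 1) % (a * a)) 0 = y).card = 1)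
    (T : List ℕ) (hT : T = (List.range l).flatMap D) :
    ∀ c < l * a,
      ((List.range T.length).filterMap fun j =>
          if T.getD j 0 = c then some (T.getD ((j + T.length - 1) % T.length) 0)
          else none).length = a ∧
      ((List.range T.length).filterMap fun j =>
          if T.getD j 0 = c then some (T.getD ((j + T.length - 1) % T.length) 0)
          else none).Nodup :=
  debruijn_bwt_segments_general a l D hlen halph hdebruijn T hT
end
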